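/- arXiv:math/0305051 — 4 statements merged into one kernel-verified Lean document; each statement's English description precedes it below -/
import Mathlib

section
/- For 0 < q < 1, the series ζ(z) = Σ_{n=1}^∞ [n]_q^{-z} [2n]_q, where [n]_q = (q^n - q^{-n})/(q - q^{-1}), converges absolutely for every complex z with Re z > 2. -/
/-- The q-number `[n]_q = (qⁿ - q⁻ⁿ)/(q - q⁻¹)`. -/
noncomputable def qnum (q : ℝ) (n : ℕ) : ℝ := (q ^ (n : ℤ) - q ^ (-(n : ℤ))) / (q - q⁻¹)

/-!
For `0 < q < 1` the renormalised q-number `[n]_q qⁿ = (1 - q²ⁿ)/(q⁻¹ - q)` lies between two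
positive constants once `n ≥ 1`, so `[n]_q^{-Re z} [2n]_q` is bounded by a multiple of
`(q^{Re z - 2})ⁿ`, a geometric sequence with ratio `< 1` exactly when `Re z > 2`.
-/

open Real

theorem rpow_neg_mul_eq {q a b s : ℝ} (hq : 0 < q) (ha : 0 ≤ a) (m : ℕ) :
    a ^ (-s) * b = (a * q ^ m) ^ (-s) * (b * q ^ (2 * m)) * (q ^ (s - 2)) ^ m := by
  rw [mul_rpow ha (by positivity), ← rpow_natCast, ← rpow_natCast, ← rpow_natCast,
    ← rpow_mul hq.le, ← rpow_mul hq.le]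
  have key : q ^ ((m : ℝ) * -s) * (q ^ ((2 * m : ℕ) : ℝ) * q ^ ((s - 2) * m)) = 1 := by
    rw [← rpow_add hq, ← rpow_add hq]
    push_cast
    ring_nf
    exact rpow_zero q
  linear_combination (a ^ (-s) * b) * key.symm

theorem qnum_mul_pow {q : ℝ} (hq : q ≠ 0) (n : ℕ) :
    qnum q n * q ^ n = (1 - (q ^ 2) ^ n) / (q⁻¹ - q) := by
  rw [qnum, zpow_neg, zpow_natCast, ← neg_div_neg_eq, div_mul_eq_mul_div, ← pow_mul]
  congr 1
  · rw [mul_comm 2 n, pow_mul]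
    field_simp
    ring
  · ring

section

variable {q : ℝ}

theorem inv_sub_self_pos (hq0 : 0 < q) (hq1 : q < 1) : 0 < q⁻¹ - q :=
  sub_pos.2 (hq1.trans (one_lt_inv₀ hq0 |>.2 hq1))

theorem one_sub_sq_div_inv_sub_self_pos (hq0 : 0 < q) (hq1 : q < 1) :
    0 < (1 - q ^ 2) / (q⁻¹ - q) :=
  div_pos (by nlinarith) (inv_sub_self_pos hq0 hq1)

theorem qnum_mul_pow_le (hq0 : 0 < q) (hq1 : q < 1) (n : ℕ) :
    qnum q n * q ^ n ≤ (q⁻¹ - q)⁻¹ := by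
  rw [qnum_mul_pow hq0.ne', div_eq_mul_inv]
  exact mul_le_of_le_one_left (inv_pos.2 (inv_sub_self_pos hq0 hq1)).le
    (sub_le_self _ (by positivity))

theorem le_qnum_mul_pow (hq0 : 0 < q) (hq1 : q < 1) {n : ℕ} (hn : n ≠ 0) :
    (1 - q ^ 2) / (q⁻¹ - q) ≤ qnum q n * q ^ n := by
  rw [qnum_mul_pow hq0.ne']
  gcongr
  · exact (inv_sub_self_pos hq0 hq1).le
  · exact pow_le_of_le_one (by positivity) (by nlinarith) hn

theorem qnum_pos (hq0 : 0 < q) (hq1 : q < 1) {n : ℕ} (hn : n ≠ 0) : 0 < qnum q n :=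
  pos_of_mul_pos_left ((one_sub_sq_div_inv_sub_self_pos hq0 hq1).trans_le
    (le_qnum_mul_pow hq0 hq1 hn)) (by positivity)

theorem norm_qnum_cpow_mul_qnum_le (hq0 : 0 < q) (hq1 : q < 1) {z : ℂ} (hz : 0 ≤ z.re)
    {m : ℕ} (hm : m ≠ 0) :
    ‖(qnum q m : ℂ) ^ (-z) * (qnum q (2 * m) : ℂ)‖ ≤
      ((1 - q ^ 2) / (q⁻¹ - q)) ^ (-z.re) * (q⁻¹ - q)⁻¹ * (q ^ (z.re - 2)) ^ m := by
  have hpos := qnum_pos hq0 hq1 hm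
  have hpos₂ := qnum_pos hq0 hq1 (mul_ne_zero two_ne_zero hm)
  have hc := one_sub_sq_div_inv_sub_self_pos hq0 hq1
  rw [norm_mul, Complex.norm_cpow_eq_rpow_re_of_pos hpos,
    Complex.norm_of_nonneg hpos₂.le, Complex.neg_re,
    rpow_neg_mul_eq hq0 hpos.le]
  refine mul_le_mul_of_nonneg_right (mul_le_mul ?_ (qnum_mul_pow_le hq0 hq1 _)
    (mul_pos hpos₂ (by positivity)).le (rpow_pos_of_pos hc _).le) (by positivity)
  exact rpow_le_rpow_of_nonpos hc (le_qnum_mul_pow hq0 hq1 hm) (neg_nonpos.2 hz)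

end

/-- For `0 < q < 1`, the series `ζ(z) = Σ_{n≥1} [n]_q^{-z} [2n]_q` converges absolutely
for every complex `z` with `Re z > 2`. -/
theorem stmt1 (q : ℝ) (hq0 : 0 < q) (hq1 : q < 1) (z : ℂ) (hz : 2 < z.re) :
    Summable (fun n : ℕ =>
      ‖((qnum q (n + 1) : ℂ)) ^ (-z) * ((qnum q (2 * (n + 1)) : ℂ))‖) := by
  have hratio : q ^ (z.re - 2) < 1 := rpow_lt_one hq0.le hq1 (by linarith)
  have hgeom := (summable_geometric_of_lt_one (by positivity) hratio).mul_left
    (((1 - q ^ 2) / (q⁻¹ - q)) ^ (-z.re) * (q⁻¹ - q)⁻¹)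
  exact .of_nonneg_of_le (fun _ => norm_nonneg _)
    (fun n => norm_qnum_cpow_mul_qnum_le hq0 hq1 (by linarith) n.succ_ne_zero)
    ((summable_nat_add_iff 1).2 hgeom)
end

section
/- Let h be a linear functional on an algebra X, σ an automorphism with h(xy) = h(σ(y)x), and let δ₁ = R_F, δ₂ = R_E be derivations on X such that h(δ₁(x)δ₂(y)) = q² h(δ₂(x)δ₁(y)) for all x,y and δ₁δ₂ = δ₂δ₁ on X. Then τ(x₀,x₁,x₂) = h(x₀(δ₁(x₁)δ₂(x₂) − q²δ₂(x₁)δ₁(x₂))) satisfies the twisted cyclicity condition τ(x₀,x₁,x₂) = τ(σ(x₂),x₀,x₁). -/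
/-- Let `h` be a linear functional on `X` with `h(xy) = h(σ(y)x)`, and let `δ₁, δ₂` be
commuting derivations with `h(δ₁(x)δ₂(y)) = q² h(δ₂(x)δ₁(y))`.  Then
`τ(x₀,x₁,x₂) = h(x₀(δ₁(x₁)δ₂(x₂) - q²δ₂(x₁)δ₁(x₂)))` satisfies the twisted cyclicity
condition `τ(x₀,x₁,x₂) = τ(σ(x₂),x₀,x₁)`. -/
theorem stmt16 (q : ℝ) (hq0 : 0 < q) (hq1 : q < 1)
    {X : Type*} [Ring X] [Algebra ℂ X]
    (σ : X ≃ₐ[ℂ] X) (h : X →ₗ[ℂ] ℂ)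
    (htrace : ∀ x y : X, h (x * y) = h (σ y * x))
    (δ₁ δ₂ : X →ₗ[ℂ] X)
    (hδ₁ : ∀ x y : X, δ₁ (x * y) = x * δ₁ y + δ₁ x * y)
    (hδ₂ : ∀ x y : X, δ₂ (x * y) = x * δ₂ y + δ₂ x * y)
    (hcomm : ∀ x : X, δ₁ (δ₂ x) = δ₂ (δ₁ x))
    (hex : ∀ x y : X, h (δ₁ x * δ₂ y) = (q : ℂ) ^ 2 * h (δ₂ x * δ₁ y)) :
    ∀ x₀ x₁ x₂ : X,
      h (x₀ * (δ₁ x₁ * δ₂ x₂ - (q : ℂ) ^ 2 • (δ₂ x₁ * δ₁ x₂)))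
        = h (σ x₂ * (δ₁ x₀ * δ₂ x₁ - (q : ℂ) ^ 2 • (δ₂ x₀ * δ₁ x₁))) := by
  intro x₀ x₁ x₂
  have e1 : h (x₀ * (δ₁ x₁ * δ₂ x₂)) + h (δ₁ x₀ * (x₁ * δ₂ x₂))
      = (q : ℂ) ^ 2 * h (x₀ * (δ₂ x₁ * δ₁ x₂)) + (q : ℂ) ^ 2 * h (δ₂ x₀ * (x₁ * δ₁ x₂)) := by
    have := hex (x₀ * x₁) x₂
    rw [hδ₁, hδ₂] at this
    simpa [add_mul, mul_assoc, mul_add] using this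
  have e2 : h (δ₁ x₀ * (x₁ * δ₂ x₂)) + h (δ₁ x₀ * (δ₂ x₁ * x₂))
      = (q : ℂ) ^ 2 * h (δ₂ x₀ * (x₁ * δ₁ x₂)) + (q : ℂ) ^ 2 * h (δ₂ x₀ * (δ₁ x₁ * x₂)) := by
    have := hex x₀ (x₁ * x₂)
    rw [hδ₁, hδ₂] at this
    simpa [mul_add, mul_assoc] using this
  have e3 : h (δ₁ x₀ * (δ₂ x₁ * x₂)) = h (σ x₂ * (δ₁ x₀ * δ₂ x₁)) := by
    rw [← mul_assoc]; exact htrace _ _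
  have e4 : h (δ₂ x₀ * (δ₁ x₁ * x₂)) = h (σ x₂ * (δ₂ x₀ * δ₁ x₁)) := by
    rw [← mul_assoc]; exact htrace _ _
  simp only [mul_sub, mul_smul_comm, map_sub, map_smul, smul_eq_mul]
  linear_combination e1 - e2 + e3 - (q : ℂ) ^ 2 * e4
end

section
/- Under the hypotheses above (σ-twisted trace h, commuting derivations δ₁ = R_F, δ₂ = R_E with h(δ₁(x)δ₂(y)) = q²h(δ₂(x)δ₁(y))), the trilinear form τ(x₀,x₁,x₂) = h(x₀(δ₁(x₁)δ₂(x₂) − q²δ₂(x₁)δ₁(x₂))) satisfies b_σ τ = 0, where (b_σ τ)(x₀,x₁,x₂,x₃) = τ(x₀x₁,x₂,x₃) − τ(x₀,x₁x₂,x₃) + τ(x₀,x₁,x₂x₃) − τ(σ(x₃)x₀,x₁,x₂). -/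
/-- Under the hypotheses of a `σ`-twisted trace `h` and commuting derivations `δ₁, δ₂`
with `h(δ₁(x)δ₂(y)) = q²h(δ₂(x)δ₁(y))`, the trilinear form
`τ(x₀,x₁,x₂) = h(x₀(δ₁(x₁)δ₂(x₂) - q²δ₂(x₁)δ₁(x₂)))` satisfies `b_σ τ = 0`:
`τ(x₀x₁,x₂,x₃) - τ(x₀,x₁x₂,x₃) + τ(x₀,x₁,x₂x₃) - τ(σ(x₃)x₀,x₁,x₂) = 0`. -/
theorem stmt17 (q : ℝ) (hq0 : 0 < q) (hq1 : q < 1)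
    {X : Type*} [Ring X] [Algebra ℂ X]
    (σ : X ≃ₐ[ℂ] X) (h : X →ₗ[ℂ] ℂ)
    (htrace : ∀ x y : X, h (x * y) = h (σ y * x))
    (δ₁ δ₂ : X →ₗ[ℂ] X)
    (hδ₁ : ∀ x y : X, δ₁ (x * y) = x * δ₁ y + δ₁ x * y)
    (hδ₂ : ∀ x y : X, δ₂ (x * y) = x * δ₂ y + δ₂ x * y)
    (hcomm : ∀ x : X, δ₁ (δ₂ x) = δ₂ (δ₁ x))
    (hex : ∀ x y : X, h (δ₁ x * δ₂ y) = (q : ℂ) ^ 2 * h (δ₂ x * δ₁ y))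
    (τ : X → X → X → ℂ)
    (hτ : ∀ x₀ x₁ x₂ : X,
      τ x₀ x₁ x₂ = h (x₀ * (δ₁ x₁ * δ₂ x₂ - (q : ℂ) ^ 2 • (δ₂ x₁ * δ₁ x₂)))) :
    ∀ x₀ x₁ x₂ x₃ : X,
      τ (x₀ * x₁) x₂ x₃ - τ x₀ (x₁ * x₂) x₃ + τ x₀ x₁ (x₂ * x₃)
        - τ (σ x₃ * x₀) x₁ x₂ = 0 := by
  intro x₀ x₁ x₂ x₃
  have key : σ x₃ * x₀ * (δ₁ x₁ * δ₂ x₂ - (q : ℂ) ^ 2 • (δ₂ x₁ * δ₁ x₂))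
      = σ x₃ * (x₀ * (δ₁ x₁ * δ₂ x₂ - (q : ℂ) ^ 2 • (δ₂ x₁ * δ₁ x₂))) := by
    rw [mul_assoc]
  simp only [hτ, hδ₁, hδ₂, key, ← htrace]
  rw [← map_sub, ← map_add, ← map_sub, show
    x₀ * x₁ * (δ₁ x₂ * δ₂ x₃ - (q : ℂ) ^ 2 • (δ₂ x₂ * δ₁ x₃)) -
        x₀ * ((x₁ * δ₁ x₂ + δ₁ x₁ * x₂) * δ₂ x₃ -
          (q : ℂ) ^ 2 • ((x₁ * δ₂ x₂ + δ₂ x₁ * x₂) * δ₁ x₃)) +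
        x₀ * (δ₁ x₁ * (x₂ * δ₂ x₃ + δ₂ x₂ * x₃) -
          (q : ℂ) ^ 2 • (δ₂ x₁ * (x₂ * δ₁ x₃ + δ₁ x₂ * x₃))) -
        x₀ * (δ₁ x₁ * δ₂ x₂ - (q : ℂ) ^ 2 • (δ₂ x₁ * δ₁ x₂)) * x₃ = 0 from by
      simp only [mul_sub, sub_mul, mul_add, add_mul, mul_smul_comm, smul_mul_assoc,
        mul_assoc, smul_sub, smul_add]
      abel, map_zero]
end

section
/- In the localization of O(SU_q(2)) at the Ore set {b^k c^n}, for each generator x ∈ {A, B, B*} of O(S_q^2) one has R_F(x) = [q^{1/2}λ^{-1} d b^{-1}, x] and R_E(x) = −[q^{-1/2}λ^{-1} a c^{-1}, x], where λ = q − q^{-1}; explicitly e.g. [db^{-1}, B] = λ q c², using ab = qba, ac = qca, bc = cb, bd = qdb, cd = qdc, ad − qbc = 1, da − q^{-1}bc = 1, and R_F(B) = −q^{3/2}c². -/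
/-!
Conjugation by the Ore generators only rescales the other generators by powers of `q`
(`b⁻¹ a = q a b⁻¹`, `d b⁻¹ = q b⁻¹ d`, `c⁻¹ a = q a c⁻¹`, `d c⁻¹ = q c⁻¹ d`), so both products
in each commutator `[d b⁻¹, x]`, `[a c⁻¹, x]` are multiples of a single monomial. In
`[d b⁻¹, B]` and `[a c⁻¹, B*]` the two monomials differ only in the order of `a` and `d`, and
subtracting the determinant relations gives `ad - da = λ bc`; in the other four commutators the
two products are the same monomial with coefficients differing by a factor `q²`, so their
difference is again a multiple of `λ`.
-/

section QCommutation

variable {R X : Type*} [CommSemiring R] [Semiring X] [Algebra R X] {r : R} {u v vi : X}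

theorem inv_mul_eq_smul_mul_inv (h : u * v = r • (v * u)) (hv : v * vi = 1) (hv' : vi * v = 1) :
    vi * u = r • (u * vi) := by
  calc vi * u = vi * (u * v) * vi := by rw [mul_assoc vi, mul_assoc u, hv, mul_one]
    _ = r • (u * vi) := by rw [h, mul_smul_comm, smul_mul_assoc, ← mul_assoc, hv', one_mul]

theorem mul_inv_eq_smul_inv_mul (h : v * u = r • (u * v)) (hv : v * vi = 1) (hv' : vi * v = 1) :
    u * vi = r • (vi * u) := by
  calc u * vi = vi * (v * u) * vi := by rw [← mul_assoc, hv', one_mul]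
    _ = r • (vi * u) := by
      rw [h, mul_smul_comm, smul_mul_assoc, ← mul_assoc, mul_assoc _ v, hv, mul_one]

end QCommutation

theorem mul_eq_inv_smul_mul {K X : Type*} [Semifield K] [Semiring X] [Algebra K X] {r : K}
    {u v : X} (hr : r ≠ 0) (h : u * v = r • (v * u)) : v * u = r⁻¹ • (u * v) := by
  rw [h, smul_smul, inv_mul_cancel₀ hr, one_smul]

theorem smul_mul_sub_mul_smul {R X : Type*} [CommRing R] [Ring X] [Algebra R X] (r : R)
    (x y : X) : r • x * y - y * r • x = r • ⁅x, y⁆ := by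
  rw [Ring.lie_def, smul_mul_assoc, mul_smul_comm, smul_sub]

structure SUq2Relations {K X : Type*} [Field K] [Ring X] [Algebra K X] (q : K) (a b c d : X) :
    Prop where
  ab : a * b = q • (b * a)
  ac : a * c = q • (c * a)
  bc : b * c = c * b
  bd : b * d = q • (d * b)
  cd : c * d = q • (d * c)
  ad : a * d = 1 + q • (b * c)
  da : d * a = 1 + q⁻¹ • (b * c)

section PodlesSphere

variable {K X : Type*} [Field K] [Ring X] [Algebra K X]

def podlesA (q : K) (b c : X) : X := -q⁻¹ • (b * c)

def podlesB (a c : X) : X := a * c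

def podlesBstar (b d : X) : X := -(d * b)

end PodlesSphere

namespace SUq2Relations

variable {K X : Type*} [Field K] [Ring X] [Algebra K X] {q : K} {a b c d bi ci : X}
  (h : SUq2Relations q a b c d)
include h

theorem ad_sub_da : a * d - d * a = (q - q⁻¹) • (b * c) := by
  rw [h.ad, h.da, sub_smul]; abel

section InvB

variable (hb : b * bi = 1) (hb' : bi * b = 1)
include hb hb'

theorem commute_c_binv : Commute c bi :=
  Commute.units_inv_right (u := ⟨b, bi, hb, hb'⟩) h.bc.symm

theorem binv_mul_a : bi * a = q • (a * bi) := inv_mul_eq_smul_mul_inv h.ab hb hb'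

theorem d_mul_binv : d * bi = q • (bi * d) := mul_inv_eq_smul_inv_mul h.bd hb hb'

theorem lie_dbinv_podlesA (hq : q ≠ 0) : ⁅d * bi, podlesA q b c⁆ = (q - q⁻¹) • (d * c) := by
  have left : d * bi * (b * c) = d * c := by rw [mul_assoc, ← mul_assoc bi, hb', one_mul]
  have right : b * c * (d * bi) = q ^ 2 • (d * c) := by
    rw [h.d_mul_binv hb hb', mul_smul_comm, mul_assoc, ← mul_assoc c,
      (h.commute_c_binv hb hb').eq, mul_assoc bi, ← mul_assoc b, hb, one_mul, h.cd, smul_smul, sq]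
  rw [podlesA, Ring.lie_def, mul_smul_comm, smul_mul_assoc, left, right]
  match_scalars
  field_simp
  ring

theorem lie_dbinv_podlesB : ⁅d * bi, podlesB a c⁆ = -(q * (q - q⁻¹)) • (c * c) := by
  have left : d * bi * (a * c) = q • (d * a * c * bi) := by
    rw [mul_assoc, ← mul_assoc bi, h.binv_mul_a hb hb', smul_mul_assoc, mul_assoc a,
      ← (h.commute_c_binv hb hb').eq, mul_smul_comm]
    simp only [mul_assoc]
  have right : a * c * (d * bi) = q • (a * d * c * bi) := by
    rw [mul_assoc, ← mul_assoc c, h.cd, smul_mul_assoc, mul_smul_comm]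
    simp only [mul_assoc]
  have hbcc : b * c * c * bi = c * c := by
    rw [h.bc, mul_assoc c, h.bc, mul_assoc, mul_assoc, hb, mul_one]
  rw [podlesB, Ring.lie_def, left, right, ← smul_sub, ← sub_mul, ← sub_mul, ← neg_sub,
    h.ad_sub_da, neg_mul, neg_mul, smul_mul_assoc, smul_mul_assoc, hbcc]
  match_scalars
  ring

theorem lie_dbinv_podlesBstar (hq : q ≠ 0) :
    ⁅d * bi, podlesBstar b d⁆ = (q - q⁻¹) • (d * d) := by
  have left : d * bi * (d * b) = q⁻¹ • (d * d) := by
    rw [mul_assoc, ← mul_assoc bi, mul_eq_inv_smul_mul hq (h.d_mul_binv hb hb'), smul_mul_assoc,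
      mul_smul_comm, mul_assoc, hb', mul_one]
  have right : d * b * (d * bi) = q • (d * d) := by
    rw [mul_assoc, ← mul_assoc b, h.bd, smul_mul_assoc, mul_smul_comm, mul_assoc, hb, mul_one]
  rw [podlesBstar, Ring.lie_def, mul_neg, neg_mul, left, right]
  match_scalars
  ring

end InvB

section InvC

variable (hc : c * ci = 1) (hc' : ci * c = 1)
include hc hc'

theorem commute_b_cinv : Commute b ci :=
  Commute.units_inv_right (u := ⟨c, ci, hc, hc'⟩) h.bc

theorem cinv_mul_a : ci * a = q • (a * ci) := inv_mul_eq_smul_mul_inv h.ac hc hc'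

theorem d_mul_cinv : d * ci = q • (ci * d) := mul_inv_eq_smul_inv_mul h.cd hc hc'

theorem lie_acinv_podlesA (hq : q ≠ 0) :
    ⁅a * ci, podlesA q b c⁆ = -(q⁻¹ * (q - q⁻¹)) • (b * a) := by
  have left : a * ci * (b * c) = q • (b * a) := by
    rw [mul_assoc, ← mul_assoc ci, ← (h.commute_b_cinv hc hc').eq, mul_assoc, hc', mul_one, h.ab]
  have right : b * c * (a * ci) = q⁻¹ • (b * a) := by
    rw [mul_assoc, ← mul_assoc c, mul_eq_inv_smul_mul hq h.ac, smul_mul_assoc, mul_smul_comm,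
      mul_assoc, hc, mul_one]
  rw [podlesA, Ring.lie_def, mul_smul_comm, smul_mul_assoc, left, right]
  match_scalars
  ring

theorem lie_acinv_podlesB (hq : q ≠ 0) : ⁅a * ci, podlesB a c⁆ = (q - q⁻¹) • (a * a) := by
  have left : a * ci * (a * c) = q • (a * a) := by
    rw [mul_assoc, ← mul_assoc ci, h.cinv_mul_a hc hc', smul_mul_assoc, mul_smul_comm, mul_assoc,
      hc', mul_one]
  have right : a * c * (a * ci) = q⁻¹ • (a * a) := by
    rw [mul_assoc, ← mul_assoc c, mul_eq_inv_smul_mul hq h.ac, smul_mul_assoc, mul_smul_comm,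
      mul_assoc, hc, mul_one]
  rw [podlesB, Ring.lie_def, left, right, sub_smul]

theorem lie_acinv_podlesBstar (hq : q ≠ 0) :
    ⁅a * ci, podlesBstar b d⁆ = -(q⁻¹ * (q - q⁻¹)) • (b * b) := by
  have left : a * ci * (d * b) = q⁻¹ • (a * d * b * ci) := by
    rw [mul_assoc, ← mul_assoc ci, mul_eq_inv_smul_mul hq (h.d_mul_cinv hc hc'), smul_mul_assoc,
      mul_smul_comm, mul_assoc d, ← (h.commute_b_cinv hc hc').eq]
    simp only [mul_assoc]
  have right : d * b * (a * ci) = q⁻¹ • (d * a * b * ci) := by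
    rw [mul_assoc, ← mul_assoc b, mul_eq_inv_smul_mul hq h.ab, smul_mul_assoc, mul_smul_comm]
    simp only [mul_assoc]
  have hbcb : b * c * b * ci = b * b := by
    rw [mul_assoc (b * c), (h.commute_b_cinv hc hc').eq, mul_assoc b, ← mul_assoc c, hc, one_mul]
  rw [podlesBstar, Ring.lie_def, mul_neg, neg_mul, sub_neg_eq_add, left, right, neg_add_eq_sub,
    ← smul_sub, ← sub_mul, ← sub_mul, ← neg_sub, h.ad_sub_da, neg_mul, neg_mul, smul_mul_assoc,
    smul_mul_assoc, hbcb]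
  match_scalars
  ring

end InvC

end SUq2Relations

/-- In the localization of `O(SU_q(2))` at the Ore set generated by `b, c` (modeled by an
algebra in which `b` and `c` have two-sided inverses `bi, ci`), for each generator
`x ∈ {A, B, B*}` of `O(S_q²)` one has
`R_F(x) = [q^{1/2}λ⁻¹ d b⁻¹, x]` and `R_E(x) = -[q^{-1/2}λ⁻¹ a c⁻¹, x]`, where
`λ = q - q⁻¹`, with the known values `R_F(A) = q^{1/2}dc`, `R_F(B) = -q^{3/2}c²`,
`R_F(B*) = q^{1/2}d²`, `R_E(A) = q^{-3/2}ba`, `R_E(B) = -q^{-1/2}a²`,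
`R_E(B*) = q^{-3/2}b²`. -/
theorem stmt18 (q : ℝ) (hq0 : 0 < q) (hq1 : q < 1)
    {X : Type*} [Ring X] [Algebra ℂ X] (a b c d bi ci : X)
    (hab : a * b = (q : ℂ) • (b * a))
    (hac : a * c = (q : ℂ) • (c * a))
    (hbc : b * c = c * b)
    (hbd : b * d = (q : ℂ) • (d * b))
    (hcd : c * d = (q : ℂ) • (d * c))
    (had : a * d = 1 + (q : ℂ) • (b * c))
    (hda : d * a = 1 + (q : ℂ)⁻¹ • (b * c))
    (hb1 : b * bi = 1) (hb2 : bi * b = 1)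
    (hc1 : c * ci = 1) (hc2 : ci * c = 1)
    (A B Bs : X)
    (hA : A = -(q : ℂ)⁻¹ • (b * c)) (hB : B = a * c) (hBs : Bs = -(d * b)) :
    -- R_F(x) = [q^{1/2} λ⁻¹ d b⁻¹, x]
    (((Real.sqrt q : ℂ) * ((q : ℂ) - (q : ℂ)⁻¹)⁻¹) • (d * bi) * A
        - A * ((Real.sqrt q : ℂ) * ((q : ℂ) - (q : ℂ)⁻¹)⁻¹) • (d * bi)
      = (Real.sqrt q : ℂ) • (d * c)) ∧
    (((Real.sqrt q : ℂ) * ((q : ℂ) - (q : ℂ)⁻¹)⁻¹) • (d * bi) * B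
        - B * ((Real.sqrt q : ℂ) * ((q : ℂ) - (q : ℂ)⁻¹)⁻¹) • (d * bi)
      = -((q : ℂ) * (Real.sqrt q : ℂ)) • (c * c)) ∧
    (((Real.sqrt q : ℂ) * ((q : ℂ) - (q : ℂ)⁻¹)⁻¹) • (d * bi) * Bs
        - Bs * ((Real.sqrt q : ℂ) * ((q : ℂ) - (q : ℂ)⁻¹)⁻¹) • (d * bi)
      = (Real.sqrt q : ℂ) • (d * d)) ∧
    -- R_E(x) = -[q^{-1/2} λ⁻¹ a c⁻¹, x]
    (-(((Real.sqrt q : ℂ)⁻¹ * ((q : ℂ) - (q : ℂ)⁻¹)⁻¹) • (a * ci) * A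
        - A * ((Real.sqrt q : ℂ)⁻¹ * ((q : ℂ) - (q : ℂ)⁻¹)⁻¹) • (a * ci))
      = ((q : ℂ) * (Real.sqrt q : ℂ))⁻¹ • (b * a)) ∧
    (-(((Real.sqrt q : ℂ)⁻¹ * ((q : ℂ) - (q : ℂ)⁻¹)⁻¹) • (a * ci) * B
        - B * ((Real.sqrt q : ℂ)⁻¹ * ((q : ℂ) - (q : ℂ)⁻¹)⁻¹) • (a * ci))
      = -(Real.sqrt q : ℂ)⁻¹ • (a * a)) ∧
    (-(((Real.sqrt q : ℂ)⁻¹ * ((q : ℂ) - (q : ℂ)⁻¹)⁻¹) • (a * ci) * Bs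
        - Bs * ((Real.sqrt q : ℂ)⁻¹ * ((q : ℂ) - (q : ℂ)⁻¹)⁻¹) • (a * ci))
      = ((q : ℂ) * (Real.sqrt q : ℂ))⁻¹ • (b * b)) := by
  have h : SUq2Relations (q : ℂ) a b c d := ⟨hab, hac, hbc, hbd, hcd, had, hda⟩
  have hq : (q : ℂ) ≠ 0 := by exact_mod_cast hq0.ne'
  have hlam : (q : ℂ) - (q : ℂ)⁻¹ ≠ 0 := by
    have : q < q⁻¹ := hq1.trans ((one_lt_inv₀ hq0).mpr hq1)
    exact_mod_cast (sub_neg.mpr this).ne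
  obtain rfl : A = podlesA (q : ℂ) b c := hA
  obtain rfl : B = podlesB a c := hB
  obtain rfl : Bs = podlesBstar b d := hBs
  simp only [smul_mul_sub_mul_smul, h.lie_dbinv_podlesA hb1 hb2 hq, h.lie_dbinv_podlesB hb1 hb2,
    h.lie_dbinv_podlesBstar hb1 hb2 hq, h.lie_acinv_podlesA hc1 hc2 hq,
    h.lie_acinv_podlesB hc1 hc2 hq, h.lie_acinv_podlesBstar hc1 hc2 hq]
  generalize (q : ℂ) - (q : ℂ)⁻¹ = lam at hlam ⊢
  refine ⟨?_, ?_, ?_, ?_, ?_, ?_⟩ <;> match_scalars <;> field_simp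
end
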